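/- arXiv:q-bio/0406048 — 4 statements merged into one kernel-verified Lean document; each statement's English description precedes it below -/
import Mathlib

section
/- If A and B are two (row-)stochastic matrices of the same size, then 1 - m(AB) ≤ (1 - m(A))(1 - m(B)), where for a matrix M, m(M) is defined as the sum over columns j of the minimum over rows i of the entry M_{i,j}. -/
/-!
Let `a k` and `b j` be the column minima of `A` and `B`. Since the rows of `A` sum to one,
`(A * B) i j = b j + ∑ k, A i k * (B k j - b j) ≥ b j + ∑ k, a k * (B k j - b j)`, and summing
this lower bound over `j`, using that the rows of `B` sum to one, gives
`m(AB) ≥ m(B) + m(A) (1 - m(B))`, which is the claim rearranged.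
-/

open Finset

/-- `m(M) = Σ_j min_i M_{i,j}`. -/
noncomputable def colMinSum {n : Type*} [Fintype n] [Nonempty n]
    (M : Matrix n n ℝ) : ℝ :=
  ∑ j, Finset.univ.inf' Finset.univ_nonempty (fun i => M i j)

theorem Matrix.le_mul_apply_of_forall_le {R l m n : Type*} [CommRing R] [LinearOrder R]
    [IsStrictOrderedRing R] [Fintype m] {A : Matrix l m R} {B : Matrix m n R}
    (hA1 : ∀ i, ∑ k, A i k = 1) {a : m → R} {b : n → R}
    (ha : ∀ i k, a k ≤ A i k) (hb : ∀ k j, b j ≤ B k j) (i : l) (j : n) :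
    b j + ∑ k, a k * (B k j - b j) ≤ (A * B) i j :=
  calc b j + ∑ k, a k * (B k j - b j)
      ≤ b j + ∑ k, A i k * (B k j - b j) := by
        gcongr with k
        · exact sub_nonneg.2 (hb k j)
        · exact ha i k
    _ = (A * B) i j := by
        simp only [Matrix.mul_apply, mul_sub, sum_sub_distrib, ← sum_mul, hA1, one_mul]
        ring

theorem colMinSum_add_mul_one_sub_le_colMinSum_mul {n : Type*} [Fintype n] [Nonempty n]
    {A B : Matrix n n ℝ} (hA1 : ∀ i, ∑ j, A i j = 1) (hB1 : ∀ i, ∑ j, B i j = 1) :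
    colMinSum B + colMinSum A * (1 - colMinSum B) ≤ colMinSum (A * B) := by
  set a : n → ℝ := fun k => univ.inf' univ_nonempty fun i => A i k
  set b : n → ℝ := fun j => univ.inf' univ_nonempty fun i => B i j
  calc colMinSum B + colMinSum A * (1 - colMinSum B)
      = ∑ j, (b j + ∑ k, a k * (B k j - b j)) := by
        rw [sum_add_distrib, sum_comm]
        simp only [← mul_sum, sum_sub_distrib, hB1]
        rw [← sum_mul]
        rfl
    _ ≤ colMinSum (A * B) := sum_le_sum fun j _ => le_inf' _ _ fun i _ =>
        Matrix.le_mul_apply_of_forall_le hA1 (fun i _ => inf'_le _ (mem_univ i))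
          (fun k _ => inf'_le _ (mem_univ k)) i j

theorem one_sub_colMinSum_mul_le_general {n : Type*} [Fintype n] [Nonempty n]
    (A B : Matrix n n ℝ)
    (hA1 : ∀ i, ∑ j, A i j = 1)
    (hB1 : ∀ i, ∑ j, B i j = 1) :
    1 - colMinSum (A * B) ≤ (1 - colMinSum A) * (1 - colMinSum B) := by
  linarith [colMinSum_add_mul_one_sub_le_colMinSum_mul hA1 hB1]

/-- for row-stochastic matrices `A`, `B`,
`1 - m(AB) ≤ (1 - m(A))(1 - m(B))`. -/
theorem one_sub_colMinSum_mul_le {n : Type*} [Fintype n] [Nonempty n] [DecidableEq n]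
    (A B : Matrix n n ℝ)
    (hA0 : ∀ i j, 0 ≤ A i j) (hA1 : ∀ i, ∑ j, A i j = 1)
    (hB0 : ∀ i j, 0 ≤ B i j) (hB1 : ∀ i, ∑ j, B i j = 1) :
    1 - colMinSum (A * B) ≤ (1 - colMinSum A) * (1 - colMinSum B) :=
  one_sub_colMinSum_mul_le_general A B hA1 hB1
end

section
/- Let σ_ρ and σ_∂ be discrete random variables (the root state and leaf states). Suppose D is an event such that conditionally on D, σ_ρ and σ_∂ are independent. Then for any (measurable) reconstruction function f, P[f(σ_∂) = σ_ρ] ≤ P[Dᶜ] + max_i P[σ_ρ = i]. -/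
open Finset
open scoped Classical

/-! On `D` the root is independent of the leaves, so whatever the guess `f s` is, the mass of
`{σρ = f s, σL = s}` inside `D` is at most `max_i P[σρ = i]` times that of `{σL = s}`; summing over
`s` bounds the success of `f` on `D` by `max_i P[σρ = i]`, and off `D` it is at most `P[Dᶜ]`. -/

section

variable {Ω C S : Type*} (P : Ω → ℝ) (σρ : Ω → C) (σL : Ω → S) (D : Finset Ω) (f : S → C) (M : ℝ)

theorem sum_filter_guess_le_mul_sum [Fintype S]
    (h : ∀ s, ∑ ω ∈ D with σρ ω = f s ∧ σL ω = s, P ω ≤ M * ∑ ω ∈ D with σL ω = s, P ω) :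
    ∑ ω ∈ D with f (σL ω) = σρ ω, P ω ≤ M * ∑ ω ∈ D, P ω := by
  rw [← sum_fiberwise D σL P, ← sum_fiberwise _ σL P, mul_sum]
  refine sum_le_sum fun s _ => ?_
  have hfiber : {ω ∈ D | f (σL ω) = σρ ω ∧ σL ω = s} = {ω ∈ D | σρ ω = f s ∧ σL ω = s} :=
    filter_congr fun ω _ => ⟨fun ⟨hf, hs⟩ => ⟨hs ▸ hf.symm, hs⟩, fun ⟨hf, hs⟩ => ⟨hs ▸ hf.symm, hs⟩⟩
  simpa only [filter_filter, hfiber] using h s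

theorem sum_filter_guess_le_of_condIndep [Fintype Ω] [Fintype S] (hP0 : ∀ ω, 0 ≤ P ω)
    (hD1 : ∑ ω ∈ D, P ω ≤ 1) (hM0 : 0 ≤ M) (hM : ∀ i, ∑ ω with σρ ω = i, P ω ≤ M)
    (hroot : ∀ i, ∑ ω ∈ D with σρ ω = i, P ω = (∑ ω with σρ ω = i, P ω) * ∑ ω ∈ D, P ω)
    (hindep : ∀ i s, (∑ ω ∈ D with σρ ω = i ∧ σL ω = s, P ω) * ∑ ω ∈ D, P ω =
      (∑ ω ∈ D with σρ ω = i, P ω) * ∑ ω ∈ D with σL ω = s, P ω) :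
    ∑ ω ∈ D with f (σL ω) = σρ ω, P ω ≤ M := by
  rcases (sum_nonneg fun ω _ => hP0 ω : 0 ≤ ∑ ω ∈ D, P ω).eq_or_lt with hD | hD
  · exact (sum_le_sum_of_subset_of_nonneg (filter_subset _ D) fun ω _ _ => hP0 ω).trans (hD ▸ hM0)
  calc _ ≤ M * ∑ ω ∈ D, P ω := sum_filter_guess_le_mul_sum P σρ σL D f M fun s => by
          have hfactor := hindep (f s) s
          rw [hroot, mul_right_comm, mul_left_inj' hD.ne'] at hfactor
          exact hfactor ▸ mul_le_mul_of_nonneg_right (hM (f s)) (sum_nonneg fun ω _ => hP0 ω)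
    _ ≤ M := mul_le_of_le_one_right hM0 hD1

end

/-- if conditionally on an event `D` the root state `σρ` and the leaf
states `σL` are independent (with the law of `σρ` given `D` equal to its prior),
then for any reconstruction function `f`,
`P[f(σL) = σρ] ≤ P[Dᶜ] + max_i P[σρ = i]`. -/
theorem reconstruction_coupling_bound {Ω C S : Type*} [Fintype Ω] [DecidableEq Ω]
    [Fintype C] [Fintype S] [Nonempty C]
    (P : Ω → ℝ) (hP0 : ∀ ω, 0 ≤ P ω) (hP1 : ∑ ω, P ω = 1)
    (σρ : Ω → C) (σL : Ω → S) (D : Finset Ω)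
    (Pr : Finset Ω → ℝ) (hPr : ∀ E, Pr E = ∑ ω ∈ E, P ω)
    (hroot : ∀ i : C,
      Pr (D ∩ univ.filter fun ω => σρ ω = i) =
        Pr (univ.filter fun ω => σρ ω = i) * Pr D)
    (hindep : ∀ (i : C) (s : S),
      Pr (D ∩ univ.filter fun ω => σρ ω = i ∧ σL ω = s) * Pr D =
        Pr (D ∩ univ.filter fun ω => σρ ω = i) *
          Pr (D ∩ univ.filter fun ω => σL ω = s))
    (f : S → C) :
    Pr (univ.filter fun ω => f (σL ω) = σρ ω) ≤
      Pr Dᶜ + univ.sup' univ_nonempty (fun i : C => Pr (univ.filter fun ω => σρ ω = i)) := by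
  obtain rfl : Pr = fun E => ∑ ω ∈ E, P ω := funext hPr
  simp only [inter_filter, inter_univ] at hroot hindep ⊢
  set M := univ.sup' univ_nonempty fun i : C => ∑ ω with σρ ω = i, P ω
  have hM (i : C) : ∑ ω with σρ ω = i, P ω ≤ M :=
    le_sup' (fun i => ∑ ω with σρ ω = i, P ω) (mem_univ i)
  have hmono {E F : Finset Ω} (h : E ⊆ F) : ∑ ω ∈ E, P ω ≤ ∑ ω ∈ F, P ω :=
    sum_le_sum_of_subset_of_nonneg h fun ω _ _ => hP0 ω
  have hsuccess_on_D : ∑ ω ∈ D with f (σL ω) = σρ ω, P ω ≤ M :=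
    sum_filter_guess_le_of_condIndep P σρ σL D f M hP0 (hP1 ▸ hmono (subset_univ D))
      ((sum_nonneg fun ω _ => hP0 ω).trans (hM (Classical.arbitrary C))) hM hroot hindep
  rw [← sum_filter_add_sum_filter_not _ (· ∈ D), add_comm]
  refine add_le_add (hmono fun ω hω => mem_compl.2 (mem_filter.1 hω).2)
    ((sum_congr ?_ fun _ _ => rfl).trans_le hsuccess_on_D)
  ext ω
  simp [and_comm]
end

section
/- Fix an integer r ≥ 2. If k(n) = o(log n) as n → ∞, then for all sufficiently large n, r^{n·k(n)} < (2n-4)!/((n-2)!·2^{n-2}). Consequently, no deterministic map from n aligned sequences of length k(n) over an r-letter alphabet to trivalent phylogenetic trees on n leaves can be surjective for large n. -/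
open Nat Filter

lemma two_mul_factorial_eq (m : ℕ) :
    (2 * m)! = (∏ j ∈ Finset.range m, (2 * j + 1)) * (m ! * 2 ^ m) := by
  induction m with
  | zero => simp
  | succ m ih =>
    have h : 2 * (m + 1) = (2 * m + 1) + 1 := by ring
    rw [h, Nat.factorial_succ, Nat.factorial_succ, Finset.prod_range_succ,
      Nat.factorial_succ, pow_succ, ih]
    ring

lemma factorial_le_odd_prod (m : ℕ) :
    m ! ≤ ∏ j ∈ Finset.range m, (2 * j + 1) := by
  rw [← Finset.prod_range_add_one_eq_factorial]
  exact Finset.prod_le_prod (fun i _ => by positivity) (fun i _ => by omega)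

/-- fix `r ≥ 2`. If `k(n) = o(log n)`, then for all sufficiently
large `n`, `r^{n·k(n)} < (2n-4)!/((n-2)!·2^{n-2})`; consequently no map from
collections of `n` aligned sequences of length `k(n)` over an `r`-letter alphabet
onto the trivalent phylogenetic trees on `n` leaves (a set of that cardinality)
can be surjective. -/
theorem sequence_length_counting_bound (r : ℕ) (hr : 2 ≤ r) (k : ℕ → ℕ)
    (hk : (fun n : ℕ => (k n : ℝ)) =o[atTop] fun n : ℕ => Real.log n) :
    ∀ᶠ n : ℕ in atTop,
      ((r : ℝ) ^ (n * k n) < ((2 * n - 4)! : ℝ) / (((n - 2)! : ℝ) * 2 ^ (n - 2))) ∧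
      ∀ (T : Type) (_ : Nat.card T = (2 * n - 4)! / ((n - 2)! * 2 ^ (n - 2)))
        (f : (Fin n → Fin (k n) → Fin r) → T), ¬ Function.Surjective f := by
  have hr1 : (1 : ℝ) < r := by exact_mod_cast lt_of_lt_of_le one_lt_two hr
  have hL : 0 < Real.log r := Real.log_pos hr1
  have hc : (0 : ℝ) < 1 / (16 * Real.log r) := by positivity
  have hlogTop : Tendsto (fun n : ℕ => Real.log n) atTop atTop :=
    Real.tendsto_log_atTop.comp tendsto_natCast_atTop_atTop
  filter_upwards [hk.def hc, eventually_ge_atTop 20,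
      hlogTop.eventually_ge_atTop (2 * Real.log 4)] with n hkn hn hlog
  -- basic facts about n
  set m := n - 2 with hm
  set q := m / 2 with hq
  have hq4 : n ≤ 4 * q := by omega
  have hnR : (20 : ℝ) ≤ n := by exact_mod_cast hn
  have hnpos : (0 : ℝ) < n := by linarith
  have hlogn : 0 < Real.log n := Real.log_pos (by linarith)
  -- key: r ^ (n * k n) < (m)!  (as reals)
  have hmain : (r : ℝ) ^ (n * k n) < (m ! : ℝ) := by
    -- lower bound on m!
    have hfac : ((q + 1 : ℕ) : ℝ) ^ q ≤ (m ! : ℝ) := by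
      have := Nat.factorial_mul_pow_le_factorial (m := q) (n := m - q)
      have hq' : q + (m - q) = m := by omega
      rw [hq'] at this
      have h1 : (q + 1) ^ q ≤ (q + 1) ^ (m - q) :=
        Nat.pow_le_pow_right (by omega) (by omega)
      have h2 : (q + 1) ^ q ≤ m ! :=
        le_trans (le_trans h1 (Nat.le_mul_of_pos_left _ q.factorial_pos)) this
      exact_mod_cast h2
    have hqR : (n : ℝ) / 4 ≤ (q : ℝ) + 1 := by
      have : (n : ℝ) ≤ 4 * q := by exact_mod_cast hq4
      linarith
    have hqR' : (n : ℝ) / 4 ≤ ((q + 1 : ℕ) : ℝ) := by push_cast; linarith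
    have hqpos : (0 : ℝ) < ((q + 1 : ℕ) : ℝ) := by positivity
    rw [← Real.log_lt_log_iff (by positivity) (by positivity)]
    have hlhs : Real.log ((r : ℝ) ^ (n * k n)) = (n * k n : ℕ) * Real.log r :=
      Real.log_pow _ _
    rw [hlhs]
    have hrhs : (q : ℝ) * Real.log ((q + 1 : ℕ) : ℝ) ≤ Real.log (m ! : ℝ) := by
      calc (q : ℝ) * Real.log ((q + 1 : ℕ) : ℝ)
          = Real.log (((q + 1 : ℕ) : ℝ) ^ q) := (Real.log_pow _ _).symm
        _ ≤ Real.log (m ! : ℝ) :=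
            Real.log_le_log (by positivity) hfac
    refine lt_of_lt_of_le ?_ hrhs
    -- LHS ≤ n * (c * log n) * log r = n log n / 16
    have hk2 : (k n : ℝ) ≤ Real.log n / (16 * Real.log r) := by
      have := hkn
      simp only [Real.norm_natCast, Real.norm_eq_abs] at this
      rw [abs_of_nonneg hlogn.le] at this
      calc (k n : ℝ) ≤ 1 / (16 * Real.log r) * Real.log n := le_trans (le_abs_self _) this
        _ = Real.log n / (16 * Real.log r) := by ring
    have hlhs2 : ((n * k n : ℕ) : ℝ) * Real.log r ≤ (n : ℝ) * Real.log n / 16 := by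
      push_cast
      have h16 : (0 : ℝ) < 16 * Real.log r := by positivity
      calc (n : ℝ) * (k n) * Real.log r
          ≤ (n : ℝ) * (Real.log n / (16 * Real.log r)) * Real.log r := by
            apply mul_le_mul_of_nonneg_right _ hL.le
            exact mul_le_mul_of_nonneg_left hk2 hnpos.le
        _ = (n : ℝ) * Real.log n / 16 := by field_simp
    refine lt_of_le_of_lt hlhs2 ?_
    -- n log n / 16 < q * log (q+1)
    have hlogq : Real.log n / 2 ≤ Real.log ((q + 1 : ℕ) : ℝ) := by
      have h1 : Real.log ((n : ℝ) / 4) ≤ Real.log ((q + 1 : ℕ) : ℝ) :=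
        Real.log_le_log (by positivity) hqR'
      have h2 : Real.log ((n : ℝ) / 4) = Real.log n - Real.log 4 :=
        Real.log_div (by positivity) (by norm_num)
      linarith
    have hqn : (n : ℝ) / 4 ≤ (q : ℝ) := by
      have : (n : ℝ) ≤ 4 * q := by exact_mod_cast hq4
      linarith
    calc (n : ℝ) * Real.log n / 16 < (n : ℝ) / 4 * (Real.log n / 2) := by
          nlinarith [mul_pos hnpos hlogn]
      _ ≤ (q : ℝ) * Real.log ((q + 1 : ℕ) : ℝ) := by
          apply mul_le_mul hqn hlogq (by positivity) (by positivity)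
  -- identify the quotient with the odd product
  set P := ∏ j ∈ Finset.range m, (2 * j + 1) with hP
  have hPpos : 0 < P := Finset.prod_pos (fun i _ => by omega)
  have h2n4 : 2 * n - 4 = 2 * m := by omega
  have hfact : (2 * n - 4)! = P * (m ! * 2 ^ m) := by
    rw [h2n4]; exact two_mul_factorial_eq m
  have hdpos : 0 < m ! * 2 ^ m := by positivity
  have hdivR : ((2 * n - 4)! : ℝ) / ((m ! : ℝ) * 2 ^ m) = (P : ℝ) := by
    rw [hfact]
    push_cast
    field_simp
  have hPle : (r : ℝ) ^ (n * k n) < (P : ℝ) := by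
    calc (r : ℝ) ^ (n * k n) < (m ! : ℝ) := hmain
      _ ≤ (P : ℝ) := by exact_mod_cast factorial_le_odd_prod m
  constructor
  · rw [hdivR]; exact hPle
  · intro T hT f hf
    have hdivN : (2 * n - 4)! / (m ! * 2 ^ m) = P := by
      rw [hfact, Nat.mul_div_cancel _ hdpos]
    rw [hdivN] at hT
    have hfinT : Finite T := Nat.finite_of_card_ne_zero (by rw [hT]; omega)
    have hle := Nat.card_le_card_of_surjective f hf
    have hcard : Nat.card (Fin n → Fin (k n) → Fin r) = r ^ (n * k n) := by
      simp [Nat.card_eq_fintype_card, ← pow_mul, mul_comm]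
    rw [hcard, hT] at hle
    have : (P : ℝ) ≤ (r : ℝ) ^ (n * k n) := by exact_mod_cast hle
    linarith
end

section
/- For a continuous-time random walk on a Cayley graph: let (X_t) be a continuous-time Markov chain on a finite group R whose rate matrix satisfies Q_{α,β} = q > 0 if β = α·s for some s in a symmetric generating set S of size d (with 1 ∉ S), and Q_{α,β} = 0 for other distinct pairs. Then for any two distinct states α ≠ β and any times s, t ≥ 0, P[X_{t+s} = β | X_t = α] ≤ 1/d. -/
/-- for the continuous-time random walk on the Cayley graph of a
finite group `R` with symmetric generating set `S` of size `d` (with `1 ∉ S`),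
jumping from `α` to `α·s` at rate `q` for each `s ∈ S`, the transition probability
between any two distinct states over any elapsed time `t ≥ 0` is at most `1/d`. -/
theorem group_walk_transition_bound {R : Type*} [Fintype R] [DecidableEq R] [Group R]
    (S : Finset R) (d : ℕ) (hdcard : S.card = d) (hd0 : 0 < d)
    (hone : (1 : R) ∉ S) (hsymm : ∀ s ∈ S, s⁻¹ ∈ S)
    (q : ℝ) (hq : 0 < q)
    (Q : Matrix R R ℝ)
    (hQ : ∀ α β : R, Q α β =
      if α = β then -(q * d) else if α⁻¹ * β ∈ S then q else 0)
    (t : ℝ) (ht : 0 ≤ t) (α β : R) (hne : α ≠ β) :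
    NormedSpace.exp (t • Q) α β ≤ 1 / d := by
  have hd : (0:ℝ) < (d:ℝ) := by exact_mod_cast hd0
  -- the jump matrix
  set P : Matrix R R ℝ := Matrix.of (fun a b => if a⁻¹ * b ∈ S then (d:ℝ)⁻¹ else 0) with hPdef
  have hPentry : ∀ a b, P a b = if a⁻¹ * b ∈ S then (d:ℝ)⁻¹ else 0 := fun a b => rfl
  have hPnonneg : ∀ a b, 0 ≤ P a b := by
    intro a b; rw [hPentry]; split <;> positivity
  have hPle : ∀ a b, P a b ≤ (d:ℝ)⁻¹ := by
    intro a b; rw [hPentry]; split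
    · exact le_refl _
    · positivity
  have hProw : ∀ a, ∑ b, P a b = 1 := by
    intro a
    have h1 : ∑ c, (if c ∈ S then (d:ℝ)⁻¹ else 0) = ∑ b, P a b := by
      refine Fintype.sum_bijective (fun c => a * c) (Group.mulLeft_bijective a) _ _ ?_
      intro c; rw [hPentry]; simp
    rw [← h1, Finset.sum_ite_mem, Finset.univ_inter, Finset.sum_const, hdcard]
    simp [nsmul_eq_mul]
    field_simp
  -- powers of P
  have hPpow_nonneg : ∀ (n : ℕ) a b, 0 ≤ (P ^ n) a b := by
    intro n
    induction n with
    | zero => intro a b; simp [Matrix.one_apply]; positivity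
    | succ n ih =>
      intro a b
      rw [pow_succ, Matrix.mul_apply]
      exact Finset.sum_nonneg fun c _ => mul_nonneg (ih a c) (hPnonneg c b)
  have hPpow_row : ∀ (n : ℕ) a, ∑ b, (P ^ n) a b = 1 := by
    intro n
    induction n with
    | zero => intro a; simp [Matrix.one_apply]
    | succ n ih =>
      intro a
      simp only [pow_succ, Matrix.mul_apply]
      rw [Finset.sum_comm]
      calc ∑ c, ∑ b, (P ^ n) a c * P c b
          = ∑ c, (P ^ n) a c * ∑ b, P c b := by
            simp [Finset.mul_sum]
        _ = 1 := by simp [hProw, ih a]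
  have hPpow_le : ∀ (n : ℕ), 1 ≤ n → ∀ a b, (P ^ n) a b ≤ (d:ℝ)⁻¹ := by
    intro n hn a b
    obtain ⟨m, rfl⟩ := Nat.exists_eq_add_of_le hn
    rw [add_comm, pow_succ, Matrix.mul_apply]
    calc ∑ c, (P ^ m) a c * P c b
        ≤ ∑ c, (P ^ m) a c * (d:ℝ)⁻¹ :=
          Finset.sum_le_sum fun c _ =>
            mul_le_mul_of_nonneg_left (hPle c b) (hPpow_nonneg m a c)
      _ = (d:ℝ)⁻¹ := by rw [← Finset.sum_mul, hPpow_row, one_mul]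
  have hPpow_le_one : ∀ (n : ℕ) a b, (P ^ n) a b ≤ 1 := by
    intro n a b
    have := Finset.single_le_sum (f := fun c => (P ^ n) a c)
      (fun c _ => hPpow_nonneg n a c) (Finset.mem_univ b)
    rw [hPpow_row] at this; exact this
  -- decompose t • Q
  set x : ℝ := t * (q * d) with hxdef
  have hx : 0 ≤ x := by positivity
  have hdecomp : t • Q = (-x) • (1 : Matrix R R ℝ) + x • P := by
    ext a b
    simp only [Matrix.add_apply, Matrix.smul_apply, Matrix.one_apply, hPentry, hQ a b,
      smul_eq_mul]
    by_cases hab : a = b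
    · have : a⁻¹ * b = 1 := by rw [hab, inv_mul_cancel]
      simp [hab, this, hone, hxdef]
    · simp only [hab, if_false, mul_zero, neg_zero, zero_add]
      by_cases hm : a⁻¹ * b ∈ S
      · simp [hm, hxdef]
        field_simp
      · simp [hm]
  rw [hdecomp]
  have hcomm : Commute ((-x) • (1 : Matrix R R ℝ)) (x • P) := by
    unfold Commute SemiconjBy
    simp [smul_smul, mul_comm]
  rw [Matrix.exp_add_of_commute _ _ hcomm]
  -- exp of scalar matrix
  have hsc : NormedSpace.exp ((-x) • (1 : Matrix R R ℝ)) =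
      Real.exp (-x) • (1 : Matrix R R ℝ) := by
    have h1 : (-x) • (1 : Matrix R R ℝ) = Matrix.diagonal (fun _ : R => -x) := by
      ext a b
      by_cases hab : a = b <;>
        simp [Matrix.smul_apply, Matrix.one_apply, Matrix.diagonal_apply, hab]
    rw [h1, Matrix.exp_diagonal]
    ext a b
    by_cases hab : a = b <;>
      simp [Matrix.diagonal_apply, Matrix.smul_apply, Matrix.one_apply, hab,
        ← Real.exp_eq_exp_ℝ, Pi.exp_def]
  rw [hsc]
  -- entrywise bound on exp (x • P)
  have hpow : ∀ n : ℕ, ((x • P) ^ n) α β = x ^ n * (P ^ n) α β := by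
    intro n; rw [smul_pow]; rfl
  have hterm_nonneg : ∀ n : ℕ, 0 ≤ ((n.factorial : ℝ))⁻¹ * (x ^ n * (P ^ n) α β) := by
    intro n
    have := hPpow_nonneg n α β
    positivity
  have hterm_le : ∀ n : ℕ,
      ((n.factorial : ℝ))⁻¹ * (x ^ n * (P ^ n) α β) ≤ (d:ℝ)⁻¹ * (x ^ n / n.factorial) := by
    intro n
    rcases Nat.eq_zero_or_pos n with h0 | h1
    · subst h0
      have : (P ^ 0) α β = 0 := by simp [Matrix.one_apply, hne]
      rw [this]
      simp
    · have hb := hPpow_le n h1 α β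
      have hcoef : (0:ℝ) ≤ ((n.factorial : ℝ))⁻¹ * x ^ n := by positivity
      calc ((n.factorial : ℝ))⁻¹ * (x ^ n * (P ^ n) α β)
          ≤ ((n.factorial : ℝ))⁻¹ * (x ^ n * (d:ℝ)⁻¹) := by
            apply mul_le_mul_of_nonneg_left _ (by positivity)
            exact mul_le_mul_of_nonneg_left hb (by positivity)
        _ = (d:ℝ)⁻¹ * (x ^ n / n.factorial) := by ring
  have hsum_rhs : Summable (fun n : ℕ => (d:ℝ)⁻¹ * (x ^ n / n.factorial)) :=
    (Real.summable_pow_div_factorial x).mul_left _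
  have hterm_le_one : ∀ n : ℕ,
      ((n.factorial : ℝ))⁻¹ * (x ^ n * (P ^ n) α β) ≤ x ^ n / n.factorial := by
    intro n
    have hb := hPpow_le_one n α β
    calc ((n.factorial : ℝ))⁻¹ * (x ^ n * (P ^ n) α β)
        ≤ ((n.factorial : ℝ))⁻¹ * (x ^ n * 1) := by
          apply mul_le_mul_of_nonneg_left _ (by positivity)
          exact mul_le_mul_of_nonneg_left hb (by positivity)
      _ = x ^ n / n.factorial := by ring
  have hsum_entry : ∀ a b : R,
      Summable (fun n : ℕ => ((n.factorial : ℝ))⁻¹ • ((x • P) ^ n) a b) := by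
    intro a b
    apply Summable.of_nonneg_of_le
      (fun n => by
        have hxp : ((x • P) ^ n) a b = x ^ n * (P ^ n) a b := by rw [smul_pow]; rfl
        rw [smul_eq_mul, hxp]
        have h1 := hPpow_nonneg n a b
        positivity)
      (fun n => by
        have : ((x • P) ^ n) a b = x ^ n * (P ^ n) a b := by rw [smul_pow]; rfl
        rw [smul_eq_mul, this]
        have hb := hPpow_le_one n a b
        have h1 := hPpow_nonneg n a b
        calc ((n.factorial : ℝ))⁻¹ * (x ^ n * (P ^ n) a b)
            ≤ ((n.factorial : ℝ))⁻¹ * (x ^ n * 1) := by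
              apply mul_le_mul_of_nonneg_left _ (by positivity)
              exact mul_le_mul_of_nonneg_left hb (by positivity)
          _ = x ^ n / n.factorial := by ring)
      (Real.summable_pow_div_factorial x)
  have hsum_mat : Summable (fun n : ℕ => ((n.factorial : ℝ))⁻¹ • ((x • P) ^ n)) := by
    refine Pi.summable.2 ?_
    intro a
    rw [Pi.summable]
    intro b
    exact hsum_entry a b
  have hsum_row : ∀ a : R,
      Summable (fun n : ℕ => (((n.factorial : ℝ))⁻¹ • ((x • P) ^ n)) a) := by
    intro a
    rw [Pi.summable]
    intro b
    exact hsum_entry a b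
  have hentry : NormedSpace.exp (x • P) α β =
      ∑' n : ℕ, ((n.factorial : ℝ))⁻¹ * (x ^ n * (P ^ n) α β) := by
    rw [NormedSpace.exp_eq_tsum ℝ]
    have e1 : (∑' n : ℕ, ((n.factorial : ℝ))⁻¹ • ((x • P) ^ n)) α
        = ∑' n : ℕ, (((n.factorial : ℝ))⁻¹ • ((x • P) ^ n)) α := tsum_apply hsum_mat
    have e2 : (∑' n : ℕ, (((n.factorial : ℝ))⁻¹ • ((x • P) ^ n)) α) β
        = ∑' n : ℕ, (((n.factorial : ℝ))⁻¹ • ((x • P) ^ n)) α β := tsum_apply (hsum_row α)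
    calc (∑' n : ℕ, ((n.factorial : ℝ))⁻¹ • ((x • P) ^ n)) α β
        = ∑' n : ℕ, (((n.factorial : ℝ))⁻¹ • ((x • P) ^ n)) α β := by
          rw [congrFun e1 β]; exact e2
      _ = ∑' n : ℕ, ((n.factorial : ℝ))⁻¹ * (x ^ n * (P ^ n) α β) := by
          congr 1; funext n
          rw [Matrix.smul_apply, smul_eq_mul, hpow n]
  -- put everything together
  have hmul : ((Real.exp (-x) • (1 : Matrix R R ℝ)) * NormedSpace.exp (x • P)) α β
      = Real.exp (-x) * NormedSpace.exp (x • P) α β := by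
    rw [Matrix.smul_mul, Matrix.smul_apply, Matrix.one_mul, smul_eq_mul]
  rw [hmul, hentry]
  have hsum_lhs : Summable (fun n : ℕ => ((n.factorial : ℝ))⁻¹ * (x ^ n * (P ^ n) α β)) := by
    exact Summable.of_nonneg_of_le hterm_nonneg hterm_le hsum_rhs
  have hbound : ∑' n : ℕ, ((n.factorial : ℝ))⁻¹ * (x ^ n * (P ^ n) α β)
      ≤ (d:ℝ)⁻¹ * Real.exp x := by
    calc ∑' n : ℕ, ((n.factorial : ℝ))⁻¹ * (x ^ n * (P ^ n) α β)
        ≤ ∑' n : ℕ, (d:ℝ)⁻¹ * (x ^ n / n.factorial) :=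
          Summable.tsum_le_tsum hterm_le hsum_lhs hsum_rhs
      _ = (d:ℝ)⁻¹ * ∑' n : ℕ, x ^ n / n.factorial := tsum_mul_left
      _ = (d:ℝ)⁻¹ * Real.exp x := by rw [Real.exp_eq_exp_ℝ, NormedSpace.exp_eq_tsum_div]
  calc Real.exp (-x) * ∑' n : ℕ, ((n.factorial : ℝ))⁻¹ * (x ^ n * (P ^ n) α β)
      ≤ Real.exp (-x) * ((d:ℝ)⁻¹ * Real.exp x) :=
        mul_le_mul_of_nonneg_left hbound (Real.exp_nonneg _)
    _ = (d:ℝ)⁻¹ * (Real.exp (-x) * Real.exp x) := by ring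
    _ = 1 / d := by rw [← Real.exp_add, neg_add_cancel, Real.exp_zero, mul_one, one_div]
end
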